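/- Let V be a finite-dimensional real inner product space, J : V → V skew-symmetric and invertible, and A, B : V → V symmetric maps each commuting with J. Then ⟨B(J(A v)), v⟩ = 0 for all v ∈ V if and only if A and B commute. -/
import Mathlib


open RealInnerProductSpace

/-- Let `V` be a finite-dimensional real inner product space, `J` skew-symmetric
and invertible, and `A`, `B` symmetric maps each commuting with `J`. Then
`⟪B (J (A v)), v⟫ = 0` for all `v` if and only if `A` and `B` commute. -/
theorem stmt4 (V : Type*) [NormedAddCommGroup V] [InnerProductSpace ℝ V]
    [FiniteDimensional ℝ V] (J A B : V →ₗ[ℝ] V)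
    (hJ : ∀ x y : V, ⟪J x, y⟫ = -⟪x, J y⟫)
    (hJinv : Function.Bijective J)
    (hA : ∀ x y : V, ⟪A x, y⟫ = ⟪x, A y⟫)
    (hB : ∀ x y : V, ⟪B x, y⟫ = ⟪x, B y⟫)
    (hAJ : J ∘ₗ A = A ∘ₗ J) (hBJ : J ∘ₗ B = B ∘ₗ J) :
    (∀ v : V, ⟪B (J (A v)), v⟫ = 0) ↔ A ∘ₗ B = B ∘ₗ A := by
  have hAJ' : ∀ x : V, J (A x) = A (J x) := fun x => LinearMap.congr_fun hAJ x
  have hBJ' : ∀ x : V, J (B x) = B (J x) := fun x => LinearMap.congr_fun hBJ x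
  constructor
  · intro h
    have key : ∀ v w : V, ⟪B (J (A v)), w⟫ + ⟪B (J (A w)), v⟫ = 0 := by
      intro v w
      have hvw := h (v + w)
      simp only [map_add, inner_add_left, inner_add_right] at hvw
      have hv := h v
      have hw := h w
      linarith
    ext w
    simp only [LinearMap.comp_apply]
    apply hJinv.1
    have main : ∀ v : V, ⟪v, J (A (B w)) - J (B (A w))⟫ = 0 := by
      intro v
      have h1 : ⟪B (J (A v)), w⟫ = -⟪v, J (A (B w))⟫ := by
        rw [hB, hJ, hA, ← hAJ' (B w)]
      have h2 : ⟪B (J (A w)), v⟫ = ⟪v, J (B (A w))⟫ := by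
        rw [real_inner_comm, hBJ' (A w)]
      have := key v w
      rw [h1, h2, inner_sub_right] at *
      linarith
    have := main (J (A (B w)) - J (B (A w)))
    rw [inner_self_eq_zero, sub_eq_zero] at this
    exact this
  · intro h v
    have hcomm : ∀ x : V, A (B x) = B (A x) := fun x => LinearMap.congr_fun h x
    have e2 : ⟪A (B v), J v⟫ = 0 := by
      have : ⟪A (B v), J v⟫ = -⟪A (B v), J v⟫ := by
        calc ⟪A (B v), J v⟫ = ⟪B v, A (J v)⟫ := by rw [hA]
          _ = ⟪B v, J (A v)⟫ := by rw [hAJ']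
          _ = -⟪J (B v), A v⟫ := by rw [hJ, real_inner_comm, neg_neg]
          _ = -⟪B (J v), A v⟫ := by rw [hBJ']
          _ = -⟪J v, B (A v)⟫ := by rw [hB]
          _ = -⟪A (B v), J v⟫ := by rw [hcomm, real_inner_comm]
      linarith
    calc ⟪B (J (A v)), v⟫ = ⟪J (A v), B v⟫ := by rw [hB]
      _ = -⟪A v, J (B v)⟫ := by rw [hJ]
      _ = -⟪A v, B (J v)⟫ := by rw [hBJ']
      _ = -⟪B (A v), J v⟫ := by rw [hB]
      _ = -⟪A (B v), J v⟫ := by rw [hcomm]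
      _ = 0 := by rw [e2, neg_zero]
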